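/- For all β, λ ∈ ℂ, every integer m ≥ 2 and every k ∈ ℕ, one has (λ−β+2m)(β/2+2)_m(−m)_k − 2m(λ+2m)(β/2+2)_{m−1}(1−m)_k + m(m−1)(λ+β+2m)(β/2+2)_{m−2}(2−m)_k = (1/4)·(β+2k+2)·(−β² + 2βk + λβ + 2λk − 2βm + 4km)·(β/2+2)_{m−2}·(−m)_k. -/
import Mathlib
set_option maxHeartbeats 1000000


open Finset

/-- Ascending Pochhammer symbol `(a)_k = ∏_{i=0}^{k-1} (a+i)`. -/
noncomputable def poch (a : ℂ) (k : ℕ) : ℂ := ∏ i ∈ Finset.range k, (a + i)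

/-- `R_k(y;α) = ∏_{l=1}^{k} (y - (α-l)(α-l+1))`. -/
noncomputable def Rpoly (y α : ℂ) (k : ℕ) : ℂ :=
  ∏ l ∈ Finset.range k, (y - (α - (l + 1)) * (α - (l + 1) + 1))

/-- `R^(1)_k(y) = ∑_{j=1}^{k} (β/2-k+j+1)_{2(k-j)} (y - (β/2)(β/2+1)) R_{j-1}(y;k)`. -/
noncomputable def R1 (β y : ℂ) (k : ℕ) : ℂ :=
  ∑ j ∈ Finset.Icc 1 k,
    poch (β/2 - k + j + 1) (2*(k - j)) * (y - β/2*(β/2+1)) * Rpoly y k (j-1)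

/-- `s^(-)_m(y)`. -/
noncomputable def sminus (β lam y : ℂ) (m : ℕ) : ℂ :=
  ∑ k ∈ Finset.range (m+1),
    (m.choose k : ℂ) * poch (β/2 - lam - m) (m-k) * poch (-β/2 - m - 1) (m-k) * Rpoly y 0 k

/-- `s^(+)_m(y)`. -/
noncomputable def splus (β lam y : ℂ) (m : ℕ) : ℂ :=
  ∑ k ∈ Finset.range (m+1),
    (m.choose k : ℂ) * poch (β/2 - lam - m) (m-k) * poch (-β/2 - m + 1) (m-k) * Rpoly y 0 k

/-- Coefficients `D^(1)_k(m)`. -/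
noncomputable def D1 (β lam : ℂ) (m k : ℕ) : ℂ :=
  if k = m then lam - β + 2*m
  else (m.choose k : ℂ) * poch (lam - β/2 + k + 1) (m-k) * poch (β/2 + k + 1) (m-k-1) *
    ((k:ℂ)*(lam+β+2*m) + β/2*(lam-β-2*m))

/-- `s^(1)_m(y) = ∑_{k=0}^m D^(1)_k(m) R^(1)_k(y)`. -/
noncomputable def s1 (β lam y : ℂ) (m : ℕ) : ℂ :=
  ∑ k ∈ Finset.range (m+1), D1 β lam m k * R1 β y k

lemma poch_succ' (a : ℂ) (k : ℕ) : poch a (k+1) = poch a k * (a + k) := by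
  simp [poch, Finset.prod_range_succ]

lemma poch_shift (a : ℂ) (k : ℕ) : a * poch (a+1) k = poch a k * (a + k) := by
  induction k with
  | zero => simp [poch]
  | succ n ih =>
    rw [poch_succ', poch_succ']
    push_cast
    rw [show a * (poch (a+1) n * (a + 1 + n)) = (a * poch (a+1) n) * (a + 1 + n) from by ring, ih]
    ring

lemma poch_shift' (a : ℂ) (k : ℕ) (ha : a ≠ 0) :
    poch (a+1) k = poch a k * (a + k) / a := by
  rw [eq_div_iff ha]
  rw [mul_comm _ a, poch_shift]

/-- elementary Pochhammer identity used for the ₄F₃ representation. -/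
theorem pochhammer_combination_identity (β lam : ℂ) (m : ℕ) (hm : 2 ≤ m) (k : ℕ) :
    (lam - β + 2*(m:ℂ)) * poch (β/2 + 2) m * poch (-(m:ℂ)) k
      - 2*(m:ℂ)*(lam + 2*(m:ℂ)) * poch (β/2 + 2) (m-1) * poch (1 - (m:ℂ)) k
      + (m:ℂ)*((m:ℂ)-1)*(lam + β + 2*(m:ℂ)) * poch (β/2 + 2) (m-2) * poch (2 - (m:ℂ)) k
    = (1/4) * (β + 2*(k:ℂ) + 2) *
        (-β^2 + 2*β*(k:ℂ) + lam*β + 2*lam*(k:ℂ) - 2*β*(m:ℂ) + 4*(k:ℂ)*(m:ℂ)) *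
        poch (β/2 + 2) (m-2) * poch (-(m:ℂ)) k := by
  obtain ⟨n, rfl⟩ := Nat.exists_eq_add_of_le hm
  have h1 : 2 + n - 1 = n + 1 := by omega
  have h2 : 2 + n - 2 = n := by omega
  rw [h1, h2]
  have hc : ((2+n:ℕ):ℂ) = (n:ℂ) + 2 := by push_cast; ring
  rw [hc]
  rw [show (1 - ((n:ℂ)+2)) = -((n:ℂ)+2)+1 from by ring,
      show (2 - ((n:ℂ)+2)) = -((n:ℂ)+2)+1+1 from by ring]
  have e1 : poch (β/2+2) (2+n) = poch (β/2+2) n * (β/2+2+n) * (β/2+2+n+1) := by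
    rw [show 2+n = n+1+1 from by omega, poch_succ', poch_succ']
    push_cast; ring
  have e2 : poch (β/2+2) (n+1) = poch (β/2+2) n * (β/2+2+n) := poch_succ' _ _
  have E2 := poch_shift (-((n:ℂ)+2)) k
  have E3 := poch_shift (-((n:ℂ)+2)+1) k
  set M : ℂ := (n:ℂ)+2 with hM
  set P := poch (β/2+2) n with hP
  rw [e1, e2]
  linear_combination (2*(lam+2*M)*P*(β/2+2+(n:ℂ)) + (lam+β+2*M)*P*((k:ℂ)+1-M)) * E2
    + (-(M*(lam+β+2*M)*P)) * E3
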